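/- arXiv:2312.01467 — 2 statements merged into one kernel-verified Lean document; each statement's English description precedes it below -/
import Mathlib

section
/- Let d be a positive integer and let 0 < ε < 1/(2√d). For each vertex p of the unit hypercube [0,1]^d, define a center c_p ∈ ℝ^d by c_p(j) = −ε if p(j) = 0 and c_p(j) = 1 + ε if p(j) = 1. Then: (1) for distinct vertices p ≠ q, the axis-parallel unit hypercubes (side length 1) centered at c_p and c_q are disjoint (their L∞ distance between centers is 1 + 2ε > 1); and (2) each unit hypercube centered at c_p intersects the unit hypercube centered at (1/2, …, 1/2). Hence the independent kissing number of the family of translates of a unit hypercube in ℝ^d is at least 2^d. -/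
/-- The axis-parallel unit hypercube centered at `c`. -/
def unitCube {d : ℕ} (c : Fin d → ℝ) : Set (Fin d → ℝ) :=
  {x | ∀ j, |x j - c j| ≤ 1 / 2}

/-- for `0 < ε < 1/(2√d)`, placing, for each vertex `p` of
`[0,1]^d`, a unit hypercube centered at `c_p` with `c_p(j) = -ε` if `p(j)=0`
and `c_p(j) = 1+ε` if `p(j)=1`, yields `2^d` pairwise disjoint unit hypercubes
(distinct centers, centers at L∞ distance `1+2ε > 1`), each intersecting the
unit hypercube centered at `(1/2,…,1/2)`.  Hence the independent kissing
number of translates of a unit hypercube in `ℝ^d` is at least `2^d`. -/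
theorem stmt_6 (d : ℕ) (hd : 0 < d) (ε : ℝ) (hε : 0 < ε)
    (hε' : ε < 1 / (2 * Real.sqrt d))
    (c : (Fin d → Bool) → (Fin d → ℝ))
    (hc : ∀ p j, c p j = if p j then 1 + ε else -ε) :
    Function.Injective c ∧
    Fintype.card (Fin d → Bool) = 2 ^ d ∧
    (∀ p q : Fin d → Bool, p ≠ q → Disjoint (unitCube (c p)) (unitCube (c q))) ∧
    (∀ p q : Fin d → Bool, p ≠ q → ∃ j, 1 < |c p j - c q j|) ∧
    (∀ p : Fin d → Bool,
      (unitCube (c p) ∩ unitCube (fun _ : Fin d => (1 : ℝ) / 2)).Nonempty) := by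
  have hsd : (1 : ℝ) ≤ Real.sqrt d := by
    rw [show (1:ℝ) = Real.sqrt 1 by simp]
    exact Real.sqrt_le_sqrt (by exact_mod_cast hd)
  have hεhalf : ε ≤ 1 / 2 := by
    have : 1 / (2 * Real.sqrt d) ≤ 1 / 2 := by
      apply div_le_div_of_nonneg_left (by norm_num) (by norm_num) (by linarith)
    linarith
  have hfar : ∀ p q : Fin d → Bool, ∀ j, p j ≠ q j → 1 < |c p j - c q j| := by
    intro p q j hj
    rw [hc, hc]
    cases hp : p j <;> cases hq : q j <;> simp only [hp, hq] at hj ⊢ <;>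
      first
      | exact absurd rfl hj
      | (simp only [if_true, if_false, if_pos, if_neg, Bool.false_eq_true,
          not_false_iff]
         first
         | (rw [abs_of_nonpos (by linarith)]; linarith)
         | (rw [abs_of_nonneg (by linarith)]; linarith))
  refine ⟨?_, ?_, ?_, ?_, ?_⟩
  · intro p q hpq
    funext j
    by_contra hj
    have := hfar p q j hj
    rw [hpq] at this
    simp at this; linarith
  · simp
  · intro p q hpq
    obtain ⟨j, hj⟩ : ∃ j, p j ≠ q j := by
      by_contra h; push_neg at h; exact hpq (funext h)
    rw [Set.disjoint_left]
    intro x hx hx'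
    have h1 := hx j
    have h2 := hx' j
    have := hfar p q j hj
    have : |c p j - c q j| ≤ 1 := by
      calc |c p j - c q j| = |(c p j - x j) + (x j - c q j)| := by ring_nf
        _ ≤ |c p j - x j| + |x j - c q j| := abs_add_le _ _
        _ ≤ 1/2 + 1/2 := add_le_add (by rwa [abs_sub_comm]) h2
        _ = 1 := by norm_num
    linarith
  · intro p q hpq
    obtain ⟨j, hj⟩ : ∃ j, p j ≠ q j := by
      by_contra h; push_neg at h; exact hpq (funext h)
    exact ⟨j, hfar p q j hj⟩
  · intro p
    refine ⟨fun j => if p j then 1/2 + ε else 1/2 - ε, ?_, ?_⟩ <;> intro j <;>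
      simp only [hc] <;> cases hp : p j <;>
        simp only [hp, if_true, if_false, Bool.false_eq_true] <;>
          rw [abs_le] <;> constructor <;> linarith
end

section
/- Let c₁,…,c₅ be the vertices of a regular pentagon inscribed in a circle of radius 1.78 centered at c₆. Then for all i ≠ j in {1,…,5}, dist(c_i, c_j) ≥ 2·1.78·sin(π/5) > 2, and dist(c_i, c₆) = 1.78 < 1.8. In particular, five pairwise non-touching regular unit k-gons (k ≥ 7), each containing a ball of radius cos(π/7) > 0.9 about its center, placed at c₁,…,c₅, all intersect a congruent regular k-gon centered at c₆. -/
open Real Complex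

/-!
The vertices `k` and `l` of a regular `n`-gon of circumradius `r` are at distance
`2 r |sin (π (k - l) / n)|`, which for `k ≠ l` is at least the side length `2 r sin (π / n)`,
because `sin` on `[π / n, π - π / n]` is smallest at the endpoints. For the pentagon of
circumradius `1.78` the side exceeds `2`, while every vertex lies within `1.8` of the centre,
so the balls of radius `0.9` about a vertex and about the centre meet at the midpoint.
-/

noncomputable def regularPolygonVertex (c : ℂ) (r : ℝ) (n k : ℕ) : ℂ :=
  c + r * Complex.exp (↑(2 * π * k / n) * I)

theorem norm_exp_mul_I_sub_exp_mul_I (a b : ℝ) :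
    ‖Complex.exp (a * I) - Complex.exp (b * I)‖ = 2 * |Real.sin ((a - b) / 2)| := by
  have : Complex.exp (a * I) - Complex.exp (b * I)
      = Complex.exp (b * I) * (Complex.exp (I * ↑(a - b)) - 1) := by
    rw [mul_sub, ← Complex.exp_add, mul_one]; push_cast; ring_nf
  rw [this, norm_mul, norm_exp_ofReal_mul_I, one_mul, norm_exp_I_mul_ofReal_sub_one,
    Real.norm_eq_abs, abs_mul, abs_two]

theorem dist_regularPolygonVertex_center {r : ℝ} (hr : 0 ≤ r) (c : ℂ) (n k : ℕ) :
    dist (regularPolygonVertex c r n k) c = r := by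
  rw [regularPolygonVertex, Complex.dist_eq, add_sub_cancel_left, norm_mul,
    norm_exp_ofReal_mul_I, mul_one, norm_real, Real.norm_of_nonneg hr]

theorem dist_regularPolygonVertex {r : ℝ} (hr : 0 ≤ r) (c : ℂ) (n k l : ℕ) :
    dist (regularPolygonVertex c r n k) (regularPolygonVertex c r n l)
      = 2 * r * |Real.sin (π * ((k : ℝ) - l) / n)| := by
  rw [regularPolygonVertex, regularPolygonVertex, Complex.dist_eq, add_sub_add_left_eq_sub,
    ← mul_sub, norm_mul, norm_exp_mul_I_sub_exp_mul_I, norm_real, Real.norm_of_nonneg hr]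
  ring_nf

theorem Real.sin_le_sin_of_mem_Icc {a x : ℝ} (ha : -(π / 2) ≤ a)
    (hx : x ∈ Set.Icc a (π - a)) :
    Real.sin a ≤ Real.sin x := by
  rcases le_total x (π / 2) with hx' | hx'
  · exact sin_le_sin_of_le_of_le_pi_div_two ha hx' hx.1
  · rw [← Real.sin_pi_sub x]
    exact sin_le_sin_of_le_of_le_pi_div_two ha (by linarith) (by linarith [hx.2])

theorem sin_pi_div_le_abs_sin_pi_mul_sub_div {n k l : ℕ} (hk : k < n) (hl : l < n)
    (hkl : k ≠ l) : Real.sin (π / n) ≤ |Real.sin (π * ((k : ℝ) - l) / n)| := by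
  wlog hlk : l < k generalizing k l
  · rw [← abs_neg, ← Real.sin_neg,
      show -(π * ((k : ℝ) - l) / n) = π * ((l : ℝ) - k) / n by ring]
    exact this hl hk hkl.symm (lt_of_le_of_ne (not_lt.1 hlk) hkl)
  have hn : (0 : ℝ) < n := by exact_mod_cast (show 0 < n by omega)
  have hlk' : (l : ℝ) + 1 ≤ k := by exact_mod_cast hlk
  have hkn : (k : ℝ) + 1 ≤ n := by exact_mod_cast hk
  have hl0 : (0 : ℝ) ≤ l := l.cast_nonneg
  have hsin : Real.sin (π / n) ≤ Real.sin (π * ((k : ℝ) - l) / n) := by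
    refine Real.sin_le_sin_of_mem_Icc ?_ ⟨?_, ?_⟩
    · linarith [div_pos pi_pos hn, pi_pos]
    · gcongr; nlinarith [pi_pos]
    · rw [le_sub_iff_add_le, ← add_div, div_le_iff₀ hn]; nlinarith [pi_pos]
  exact hsin.trans (le_abs_self _)

theorem two_mul_sin_pi_div_le_dist_regularPolygonVertex {r : ℝ} (hr : 0 ≤ r) (c : ℂ)
    {n k l : ℕ} (hk : k < n) (hl : l < n) (hkl : k ≠ l) :
    2 * r * Real.sin (π / n) ≤
      dist (regularPolygonVertex c r n k) (regularPolygonVertex c r n l) := by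
  rw [dist_regularPolygonVertex hr]
  gcongr
  exact sin_pi_div_le_abs_sin_pi_mul_sub_div hk hl hkl

theorem one_lt_mul_sin_pi_div_five : (1 : ℝ) < 1.78 * Real.sin (π / 5) := by
  have hsin := sin_gt_sub_cube (x := π / 5) (by positivity)
  have h1 : 0.628 < π / 5 := by linarith [pi_gt_d2]
  have h2 : π / 5 < 0.63 := by linarith [pi_lt_d2]
  have hcube : (π / 5) ^ 3 ≤ 0.63 ^ 2 * (π / 5) := by
    rw [pow_succ]; gcongr
  linarith

/-- The half-angle formula turns `1 - x²/2 ≤ cos x` into a fourth-order bound; the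
second-order bound alone falls just short of `0.9`. -/
theorem nine_tenths_lt_cos_pi_div_seven : (0.9 : ℝ) < Real.cos (π / 7) := by
  have hcos : Real.cos (π / 7) = 2 * Real.cos (π / 14) ^ 2 - 1 := by
    rw [← Real.cos_two_mul]; ring_nf
  have hbound : 0.9748 ≤ Real.cos (π / 14) := by
    nlinarith [one_sub_sq_div_two_le_cos (x := π / 14), pi_lt_d4, pi_pos]
  nlinarith

theorem closedBall_inter_closedBall_nonempty {E : Type*} [NormedAddCommGroup E]
    [NormedSpace ℝ E] {x y : E} {r : ℝ} (h : dist x y ≤ 2 * r) :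
    (Metric.closedBall x r ∩ Metric.closedBall y r).Nonempty := by
  refine ⟨midpoint ℝ x y, ?_, ?_⟩ <;>
    simp only [Metric.mem_closedBall, dist_midpoint_left, dist_midpoint_right, Real.norm_two] <;>
    linarith

/-- let `c 0, …, c 4` be the vertices of a regular pentagon
inscribed in the circle of radius `1.78` centered at `c₆` (in the plane,
modelled by `ℂ`).  Then for `i ≠ j`, `dist (c i) (c j) ≥ 2·1.78·sin(π/5) > 2`
(so the closed unit balls at the `c i` — and hence any regular unit `k`-gons,
`k ≥ 7`, inscribed in them — are pairwise non-touching), and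
`dist (c i) c₆ = 1.78 < 1.8`; since a regular unit `k`-gon with `k ≥ 7`
contains the ball of radius `cos(π/7) > 0.9` about its center, the bodies at
`c i` and `c₆` intersect: the closed balls of radius `0.9` at `c i` and `c₆`
meet. -/
theorem stmt_11 (c₆ : ℂ) (c : Fin 5 → ℂ)
    (hc : ∀ i : Fin 5,
      c i = c₆ + 1.78 * Complex.exp ((2 * π * (i : ℕ) / 5) * Complex.I)) :
    (∀ i j : Fin 5, i ≠ j → 2 * 1.78 * Real.sin (π / 5) ≤ dist (c i) (c j)) ∧
    (∀ i j : Fin 5, i ≠ j → 2 < dist (c i) (c j)) ∧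
    (∀ i j : Fin 5, i ≠ j →
      Disjoint (Metric.closedBall (c i) 1) (Metric.closedBall (c j) 1)) ∧
    (∀ i : Fin 5, dist (c i) c₆ = 1.78) ∧ ((1.78 : ℝ) < 1.8) ∧
    ((0.9 : ℝ) < Real.cos (π / 7)) ∧
    (∀ i : Fin 5,
      (Metric.closedBall (c i) 0.9 ∩ Metric.closedBall c₆ 0.9).Nonempty) := by
  have hvertex (i : Fin 5) : c i = regularPolygonVertex c₆ 1.78 5 i := by
    rw [hc i, regularPolygonVertex]; push_cast; rfl
  have hchord (i j : Fin 5) (hij : i ≠ j) :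
      2 * 1.78 * Real.sin (π / 5) ≤ dist (c i) (c j) := by
    rw [hvertex, hvertex]
    exact_mod_cast two_mul_sin_pi_div_le_dist_regularPolygonVertex (by norm_num) c₆
      i.isLt j.isLt (Fin.val_injective.ne hij)
  have hsep (i j : Fin 5) (hij : i ≠ j) : 2 < dist (c i) (c j) := by
    linarith [one_lt_mul_sin_pi_div_five, hchord i j hij]
  have hcenter (i : Fin 5) : dist (c i) c₆ = 1.78 := by
    rw [hvertex]; exact dist_regularPolygonVertex_center (by norm_num) _ _ _
  refine ⟨hchord, hsep, fun i j hij => ?_, hcenter, by norm_num,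
    nine_tenths_lt_cos_pi_div_seven, fun i => ?_⟩
  · exact Metric.closedBall_disjoint_closedBall (by linarith [hsep i j hij])
  · exact closedBall_inter_closedBall_nonempty (by rw [hcenter]; norm_num)
end
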